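/- Let d ≥ 1, let k ≥ 1 be an integer, let ζ > 0, β ≥ 0 and ρ̄ ∈ (0,1). Let A be a d×d real matrix with ‖A^t‖₂ ≤ β·ρ̄^t for every integer t ≥ 0, let v ∈ ℝ^d, let w ∈ ℝ^d with ‖w‖₂ = 1, and let s : ℕ → ℝ^d be k-periodic (s_{t+k} = s_t for all t) with zero mean over a period, i.e. Σ_{t=0}^{k−1} s_t = 0. Set α := Σ_{t=0}^{k−1} (wᵀ s_t)², define x_t := s_t + A^t·v, and for an integer T' ≥ 0 let x̄ := (1/k)·Σ_{t=T'}^{T'+k−1} x_t. If ‖v‖₂²·β²·ρ̄^{2T'}/(1−ρ̄²) ≤ k·ζ/2 and 2·‖v‖₂·β·ρ̄^{T'}·√α/√(1−ρ̄²) ≤ k·ζ/2, then |Σ_{t=T'}^{T'+k−1} (wᵀ(x_t − x̄))² − α| ≤ k·ζ. -/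

import Mathlib

noncomputable section

open Matrix

/-- Euclidean norm of a real vector. -/
def enormR {n : Type*} [Fintype n] (v : n → ℝ) : ℝ :=
  Real.sqrt (∑ i, (v i) ^ 2)

/-- Spectral norm (ℓ² → ℓ² operator norm) of a real matrix. -/
def snormR {m n : Type*} [Fintype m] [Fintype n] (M : Matrix m n ℝ) : ℝ :=
  sSup {r : ℝ | ∃ v : n → ℝ, enormR v ≤ 1 ∧ r = enormR (M.mulVec v)}

/-!
Along `w`, the centred window sample at `T' + j` is `a j + (c j - c̄)` with `a j = wᵀ s (T' + j)`
and `c j = wᵀ A^(T'+j) v`: the periodic part has zero window mean and window power `α`.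
Expanding the square, the error is `2 Σ a j (c j - c̄) + Σ (c j - c̄)²`. Centring only lowers
`Σ (c j - c̄)² ≤ Σ (c j)²`, which the decay of `A^t` and a geometric series bound by
`‖v‖² β² ρ̄^(2T') / (1 - ρ̄²)`; Cauchy–Schwarz bounds the cross term by `2 √α` times its root.
-/

open Finset

lemma sum_range_add_of_periodic {M : Type*} [AddCommGroup M] {g : ℕ → M} {k : ℕ}
    (hg : Function.Periodic g k) (T : ℕ) :
    ∑ j ∈ range k, g (T + j) = ∑ j ∈ range k, g j := by
  induction T with
  | zero => simp
  | succ T ih =>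
    have h := (sum_range_succ' (fun j => g (T + j)) k).symm.trans
      (sum_range_succ (fun j => g (T + j)) k)
    rw [hg, add_zero, add_left_inj] at h
    rw [← ih, ← h]
    exact sum_congr rfl fun j _ => congrArg g (by omega)

lemma sum_sub_mean_sq_le {ι : Type*} (s : Finset ι) (c : ι → ℝ) :
    ∑ i ∈ s, (c i - (#s : ℝ)⁻¹ * ∑ j ∈ s, c j) ^ 2 ≤ ∑ i ∈ s, c i ^ 2 := by
  set m := (#s : ℝ)⁻¹ * ∑ j ∈ s, c j
  have hsum : ∑ j ∈ s, c j = #s * m := by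
    rcases s.eq_empty_or_nonempty with rfl | hs
    · simp
    · rw [mul_inv_cancel_left₀ (by exact_mod_cast hs.card_pos.ne')]
  clear_value m
  have hexpand : ∑ i ∈ s, (c i - m) ^ 2 = ∑ i ∈ s, c i ^ 2 - #s * m ^ 2 := by
    simp only [sub_sq, sum_add_distrib, sum_sub_distrib, ← sum_mul, ← mul_sum, hsum,
      sum_const, nsmul_eq_mul]
    ring
  have hm : (0 : ℝ) ≤ #s * m ^ 2 := by positivity
  linarith

lemma abs_sum_add_sq_sub_sum_sq_le {ι : Type*} (s : Finset ι) (a b : ι → ℝ) {E : ℝ}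
    (hb : ∑ i ∈ s, b i ^ 2 ≤ E) :
    |∑ i ∈ s, (a i + b i) ^ 2 - ∑ i ∈ s, a i ^ 2| ≤ 2 * √(∑ i ∈ s, a i ^ 2) * √E + E := by
  have hexpand : ∑ i ∈ s, (a i + b i) ^ 2 - ∑ i ∈ s, a i ^ 2
      = 2 * ∑ i ∈ s, a i * b i + ∑ i ∈ s, b i ^ 2 := by
    simp only [add_sq, sum_add_distrib, mul_sum]
    ring_nf
  have hcs : |∑ i ∈ s, a i * b i| ≤ √(∑ i ∈ s, a i ^ 2) * √E := by
    rw [← Real.sqrt_sq_eq_abs, ← Real.sqrt_mul (sum_nonneg fun i _ => sq_nonneg _)]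
    refine Real.sqrt_le_sqrt ((sum_mul_sq_le_sq_mul_sq s a b).trans ?_)
    exact mul_le_mul_of_nonneg_left hb (sum_nonneg fun i _ => sq_nonneg _)
  have hb0 : 0 ≤ ∑ i ∈ s, b i ^ 2 := sum_nonneg fun i _ => sq_nonneg _
  rw [hexpand]
  calc |2 * ∑ i ∈ s, a i * b i + ∑ i ∈ s, b i ^ 2|
      ≤ |2 * ∑ i ∈ s, a i * b i| + |∑ i ∈ s, b i ^ 2| := abs_add_le _ _
    _ = 2 * |∑ i ∈ s, a i * b i| + ∑ i ∈ s, b i ^ 2 := by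
        rw [abs_mul, abs_two, abs_of_nonneg hb0]
    _ ≤ 2 * √(∑ i ∈ s, a i ^ 2) * √E + E := by linarith

lemma enormR_nonneg {n : Type*} [Fintype n] (v : n → ℝ) : 0 ≤ enormR v :=
  Real.sqrt_nonneg _

lemma enormR_eq_norm {n : Type*} [Fintype n] (v : n → ℝ) :
    enormR v = ‖WithLp.toLp 2 v‖ := by
  simp [enormR, EuclideanSpace.norm_eq]

lemma abs_dotProduct_le_enormR_mul {n : Type*} [Fintype n] (w x : n → ℝ) :
    |w ⬝ᵥ x| ≤ enormR w * enormR x := by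
  simpa [enormR_eq_norm, EuclideanSpace.inner_toLp_toLp, dotProduct_comm] using
    abs_real_inner_le_norm (WithLp.toLp 2 w) (WithLp.toLp 2 x)

lemma snormR_eq_norm_toEuclideanCLM {n : Type*} [Fintype n] [DecidableEq n]
    (M : Matrix n n ℝ) : snormR M = ‖Matrix.toEuclideanCLM (n := n) (𝕜 := ℝ) M‖ := by
  rw [← ContinuousLinearMap.sSup_unitClosedBall_eq_norm, snormR]
  congr 1
  ext r
  simp only [Set.mem_image, Metric.mem_closedBall, dist_zero_right, enormR_eq_norm]
  constructor
  · rintro ⟨v, hv, rfl⟩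
    exact ⟨WithLp.toLp 2 v, hv, rfl⟩
  · rintro ⟨x, hx, rfl⟩
    exact ⟨x.ofLp, hx, rfl⟩

lemma enormR_mulVec_le {n : Type*} [Fintype n] (M : Matrix n n ℝ) (u : n → ℝ) :
    enormR (M *ᵥ u) ≤ snormR M * enormR u := by
  classical
  rw [snormR_eq_norm_toEuclideanCLM, enormR_eq_norm, enormR_eq_norm]
  exact (Matrix.toEuclideanCLM (n := n) (𝕜 := ℝ) M).le_opNorm (WithLp.toLp 2 u)

lemma sum_sq_dotProduct_pow_mulVec_le {n : Type*} [Fintype n] [DecidableEq n]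
    {A : Matrix n n ℝ} {β ρ : ℝ} (hρ : ρ ^ 2 < 1) (hA : ∀ t : ℕ, snormR (A ^ t) ≤ β * ρ ^ t)
    {w : n → ℝ} (hw : enormR w = 1) (v : n → ℝ) (T k : ℕ) :
    ∑ j ∈ range k, (w ⬝ᵥ (A ^ (T + j)) *ᵥ v) ^ 2 ≤
      enormR v ^ 2 * β ^ 2 * ρ ^ (2 * T) / (1 - ρ ^ 2) := by
  have hpoint : ∀ t : ℕ, (w ⬝ᵥ (A ^ t) *ᵥ v) ^ 2 ≤ (enormR v * β) ^ 2 * (ρ ^ 2) ^ t := by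
    intro t
    have h : |w ⬝ᵥ (A ^ t) *ᵥ v| ≤ β * ρ ^ t * enormR v :=
      calc |w ⬝ᵥ (A ^ t) *ᵥ v| ≤ enormR w * enormR ((A ^ t) *ᵥ v) :=
            abs_dotProduct_le_enormR_mul _ _
        _ ≤ snormR (A ^ t) * enormR v := by rw [hw, one_mul]; exact enormR_mulVec_le _ _
        _ ≤ β * ρ ^ t * enormR v := mul_le_mul_of_nonneg_right (hA t) (enormR_nonneg v)
    calc (w ⬝ᵥ (A ^ t) *ᵥ v) ^ 2 = |w ⬝ᵥ (A ^ t) *ᵥ v| ^ 2 := (sq_abs _).symm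
      _ ≤ (β * ρ ^ t * enormR v) ^ 2 := pow_le_pow_left₀ (abs_nonneg _) h 2
      _ = (enormR v * β) ^ 2 * (ρ ^ 2) ^ t := by rw [← pow_mul, mul_comm 2 t, pow_mul]; ring
  calc ∑ j ∈ range k, (w ⬝ᵥ (A ^ (T + j)) *ᵥ v) ^ 2
      ≤ ∑ j ∈ range k, (enormR v * β) ^ 2 * (ρ ^ 2) ^ (T + j) := sum_le_sum fun j _ => hpoint _
    _ = (enormR v * β) ^ 2 * ∑ i ∈ Ico T (T + k), (ρ ^ 2) ^ i := by
        rw [sum_Ico_eq_sum_range, add_tsub_cancel_left, mul_sum]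
    _ ≤ (enormR v * β) ^ 2 * ((ρ ^ 2) ^ T / (1 - ρ ^ 2)) :=
        mul_le_mul_of_nonneg_left (geom_sum_Ico_le_of_lt_one (sq_nonneg ρ) hρ) (sq_nonneg _)
    _ = enormR v ^ 2 * β ^ 2 * ρ ^ (2 * T) / (1 - ρ ^ 2) := by rw [← pow_mul]; ring

theorem stmt6_general {d : ℕ} (k : ℕ) (ζ β ρ : ℝ)
    (hβ : 0 ≤ β) (hρ0 : 0 < ρ) (hρ1 : ρ < 1)
    (A : Matrix (Fin d) (Fin d) ℝ)
    (hA : ∀ t : ℕ, snormR (A ^ t) ≤ β * ρ ^ t)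
    (v w : Fin d → ℝ) (hw : enormR w = 1)
    (s : ℕ → Fin d → ℝ) (hper : ∀ t, s (t + k) = s t)
    (hmean : ∑ t ∈ Finset.range k, s t = 0) :
    ∀ T' : ℕ,
      enormR v ^ 2 * β ^ 2 * ρ ^ (2 * T') / (1 - ρ ^ 2) ≤ k * ζ / 2 →
      2 * enormR v * β * ρ ^ T' *
          Real.sqrt (∑ t ∈ Finset.range k, (dotProduct w (s t)) ^ 2) /
          Real.sqrt (1 - ρ ^ 2) ≤ k * ζ / 2 →
      |(∑ j ∈ Finset.range k,
          (dotProduct w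
            ((s (T' + j) + (A ^ (T' + j)).mulVec v) -
              (k : ℝ)⁻¹ • ∑ j' ∈ Finset.range k, (s (T' + j') + (A ^ (T' + j')).mulVec v))) ^ 2) -
        ∑ t ∈ Finset.range k, (dotProduct w (s t)) ^ 2| ≤ k * ζ := by
  intro T' hE hcross
  have hρ2 : ρ ^ 2 < 1 := by nlinarith
  set c : ℕ → ℝ := fun j => w ⬝ᵥ (A ^ (T' + j)) *ᵥ v
  have hs0 : ∑ j ∈ range k, s (T' + j) = 0 := (sum_range_add_of_periodic hper T').trans hmean
  have hwindow : ∀ j, w ⬝ᵥ ((s (T' + j) + (A ^ (T' + j)) *ᵥ v) -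
      (k : ℝ)⁻¹ • ∑ j' ∈ range k, (s (T' + j') + (A ^ (T' + j')) *ᵥ v)) =
      w ⬝ᵥ s (T' + j) + (c j - (#(range k) : ℝ)⁻¹ * ∑ j' ∈ range k, c j') := by
    intro j
    rw [sum_add_distrib, hs0, zero_add, dotProduct_sub, dotProduct_add, dotProduct_smul,
      dotProduct_sum, smul_eq_mul, card_range]
    ring
  have hα : ∑ j ∈ range k, (w ⬝ᵥ s (T' + j)) ^ 2 = ∑ t ∈ range k, (w ⬝ᵥ s t) ^ 2 :=
    sum_range_add_of_periodic (Function.Periodic.comp hper fun x => (w ⬝ᵥ x) ^ 2) T'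
  have hsqrtE : √(enormR v ^ 2 * β ^ 2 * ρ ^ (2 * T') / (1 - ρ ^ 2)) =
      enormR v * β * ρ ^ T' / √(1 - ρ ^ 2) := by
    have hnonneg : 0 ≤ enormR v * β * ρ ^ T' :=
      mul_nonneg (mul_nonneg (enormR_nonneg v) hβ) (pow_nonneg hρ0.le T')
    rw [Real.sqrt_div' _ (sub_nonneg.mpr hρ2.le), mul_comm 2 T', pow_mul, ← mul_pow, ← mul_pow,
      Real.sqrt_sq hnonneg]
  have hbound := abs_sum_add_sq_sub_sum_sq_le (range k) (fun j => w ⬝ᵥ s (T' + j)) _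
    ((sum_sub_mean_sq_le (range k) c).trans (sum_sq_dotProduct_pow_mulVec_le hρ2 hA hw v T' k))
  rw [hα, hsqrtE] at hbound
  rw [sum_congr rfl fun j _ => congrArg (· ^ 2) (hwindow j)]
  calc _ ≤ _ := hbound
    _ = 2 * enormR v * β * ρ ^ T' * √(∑ t ∈ range k, (w ⬝ᵥ s t) ^ 2) / √(1 - ρ ^ 2) +
          enormR v ^ 2 * β ^ 2 * ρ ^ (2 * T') / (1 - ρ ^ 2) := by ring
    _ ≤ k * ζ := by linarith

/-- **Mean-subtracted transient lemma.**  If `s` is `k`-periodic with zero mean over a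
period, `‖A^t‖₂ ≤ β·ρ̄^t`, and the burn-in conditions on `T'` hold, then the mean-subtracted
window power of `x_t = s_t + A^t·v` in direction `w` over `[T', T'+k−1]` is within `k·ζ` of
the steady-state window power `α = Σ_{t<k} (wᵀ s_t)²`. -/
theorem stmt6 {d : ℕ} (hd : 1 ≤ d) (k : ℕ) (hk : 1 ≤ k) (ζ β ρ : ℝ)
    (hζ : 0 < ζ) (hβ : 0 ≤ β) (hρ0 : 0 < ρ) (hρ1 : ρ < 1)
    (A : Matrix (Fin d) (Fin d) ℝ)
    (hA : ∀ t : ℕ, snormR (A ^ t) ≤ β * ρ ^ t)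
    (v w : Fin d → ℝ) (hw : enormR w = 1)
    (s : ℕ → Fin d → ℝ) (hper : ∀ t, s (t + k) = s t)
    (hmean : ∑ t ∈ Finset.range k, s t = 0) :
    ∀ T' : ℕ,
      enormR v ^ 2 * β ^ 2 * ρ ^ (2 * T') / (1 - ρ ^ 2) ≤ k * ζ / 2 →
      2 * enormR v * β * ρ ^ T' *
          Real.sqrt (∑ t ∈ Finset.range k, (dotProduct w (s t)) ^ 2) /
          Real.sqrt (1 - ρ ^ 2) ≤ k * ζ / 2 →
      |(∑ j ∈ Finset.range k,
          (dotProduct w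
            ((s (T' + j) + (A ^ (T' + j)).mulVec v) -
              (k : ℝ)⁻¹ • ∑ j' ∈ Finset.range k, (s (T' + j') + (A ^ (T' + j')).mulVec v))) ^ 2) -
        ∑ t ∈ Finset.range k, (dotProduct w (s t)) ^ 2| ≤ k * ζ :=
  stmt6_general k ζ β ρ hβ hρ0 hρ1 A hA v w hw s hper hmean
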